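/- arXiv:1711.10227 — 2 statements merged into one kernel-verified Lean document; each statement's English description precedes it below -/
import Mathlib

section
/- Let G be a finite simple graph, s a vertex of G, and S = (v_1, …, v_t) a valid strategy for the firefighting process on (G, s). Then for every 1 ≤ i ≤ t, the distance from s to v_i in the subgraph of G induced on (V(G) ∖ {v_1, …, v_t}) ∪ {v_i} is at least i. -/
open SimpleGraph

variable {V : Type*}

/-- The set of vertices burned by the end of time step `i` (0-indexed: `burnt G s S i` is `B_i`),
when a fire starts at `s` and the firefighter defends the vertices of the list `S` in order. -/
def burnt (G : SimpleGraph V) (s : V) (S : List V) : ℕ → Set V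
  | 0 => {s}
  | i + 1 => burnt G s S i ∪
      {u | u ∉ S.take (i + 1) ∧ ∃ b ∈ burnt G s S i, G.Adj u b}

/-- The set of all vertices ever burned by the strategy `S`. -/
def BurntSet (G : SimpleGraph V) (s : V) (S : List V) : Set V := ⋃ i, burnt G s S i

/-- A strategy is a sequence of pairwise distinct vertices; it is valid if the vertex defended
at each step is not yet burning at the start of that step. -/
def ValidStrategy (G : SimpleGraph V) (s : V) (S : List V) : Prop :=
  S.Nodup ∧ ∀ (i : ℕ) (h : i < S.length), S.get ⟨i, h⟩ ∉ burnt G s S i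

/-- The number of vertices saved (i.e. not burned) by the strategy `S`. -/
noncomputable def sav (G : SimpleGraph V) (s : V) (S : List V) : ℕ := (BurntSet G s S)ᶜ.ncard

/-- A valid strategy is minimal if every proper subsequence of it which is itself a valid
strategy saves strictly fewer vertices. -/
def MinimalStrategy (G : SimpleGraph V) (s : V) (S : List V) : Prop :=
  ValidStrategy G s S ∧ ∀ S' : List V, S'.Sublist S → S' ≠ S → ValidStrategy G s S' →
    sav G s S' < sav G s S

/-- A strategy is optimal if it is minimal and saves the maximum number of vertices. -/
def OptimalStrategy (G : SimpleGraph V) (s : V) (S : List V) : Prop :=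
  MinimalStrategy G s S ∧ ∀ S' : List V, ValidStrategy G s S' → sav G s S' ≤ sav G s S

/-- A walk is an induced path if it is a path and the subgraph induced on its vertices has no
edges besides the edges of the path. -/
def IsInducedPath (G : SimpleGraph V) {a b : V} (p : G.Walk a b) : Prop :=
  p.IsPath ∧ ∀ x ∈ p.support, ∀ y ∈ p.support, G.Adj x y → p.toSubgraph.Adj x y

/-- `u` is reachable from `s` in the subgraph of `G` induced on the complement of `A`. -/
def ReachAvoiding (G : SimpleGraph V) (A : Set V) (s u : V) : Prop :=
  ∃ p : G.Walk s u, ∀ x ∈ p.support, x ∉ A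

/-! Suppose the induced subgraph had a walk of length `k < i` from `vᵢ` to `s`. Its vertices other
than `vᵢ` are never defended, and `vᵢ` is defended only at step `i > k`, so the fire advances along
the walk one vertex per step and `vᵢ ∈ B_k ⊆ B_{i-1}`, contradicting validity. -/

lemma burnt_mono (G : SimpleGraph V) (s : V) (S : List V) : Monotone (burnt G s S) :=
  monotone_nat_of_le_succ fun _ => Set.subset_union_left

lemma mem_burnt_length_of_walk {G : SimpleGraph V} {s u : V} {S : List V} (p : G.Walk u s)
    (hp : ∀ x ∈ p.support, x ∉ S.take p.length) : u ∈ burnt G s S p.length := by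
  induction p with
  | nil => rfl
  | cons hadj q ih =>
    refine Or.inr ⟨hp _ (Walk.start_mem_support _), _, ih fun x hx hxS => ?_, hadj⟩
    exact hp x (by simp [hx]) (List.take_subset_take_left _ (Nat.le_succ _) hxS)

lemma List.Nodup.getElem_notMem_take {α : Type*} {l : List α} (hl : l.Nodup) {i k : ℕ}
    (hi : i < l.length) (hk : k ≤ i) : l[i] ∉ l.take k := by
  rw [List.mem_take_iff_getElem]
  rintro ⟨j, hj, hji⟩
  have hij : j = i := hl.getElem_inj_iff.mp hji
  omega

lemma ValidStrategy.lt_length_of_walk {G : SimpleGraph V} {s : V} {S : List V}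
    (hS : ValidStrategy G s S) {i : ℕ} (hi : i < S.length) (p : G.Walk (S.get ⟨i, hi⟩) s)
    (hp : ∀ x ∈ p.support, x ∉ S ∨ x = S.get ⟨i, hi⟩) : i < p.length := by
  by_contra! hle
  refine hS.2 i hi (burnt_mono G s S hle (mem_burnt_length_of_walk p fun x hx hxS => ?_))
  rcases hp x hx with hx | rfl
  · exact hx (List.mem_of_mem_take hxS)
  · exact hS.1.getElem_notMem_take hi hle hxS

/-- `i` is 0-indexed, so the paper's bound `i` reads `i + 1` here. -/
theorem dist_to_defended_ge_general {V : Type*} (G : SimpleGraph V) (s : V)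
    (S : List V) (hS : ValidStrategy G s S) (i : ℕ) (hi : i < S.length)
    (hs : s ∈ ({x | x ∉ S} ∪ {S.get ⟨i, hi⟩} : Set V))
    (hv : S.get ⟨i, hi⟩ ∈ ({x | x ∉ S} ∪ {S.get ⟨i, hi⟩} : Set V)) :
    (i : ℕ∞) + 1 ≤
      (G.induce ({x | x ∉ S} ∪ {S.get ⟨i, hi⟩} : Set V)).edist ⟨s, hs⟩ ⟨S.get ⟨i, hi⟩, hv⟩ := by
  refine le_iInf fun p => ?_
  let q := p.map (Embedding.induce _).toHom
  have hq : ∀ x ∈ q.reverse.support, x ∉ S ∨ x = S.get ⟨i, hi⟩ := by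
    intro x hx
    rw [Walk.support_reverse, List.mem_reverse, Walk.support_map, List.mem_map] at hx
    obtain ⟨y, -, rfl⟩ := hx
    exact y.2
  have hlen : i < q.reverse.length := hS.lt_length_of_walk hi _ hq
  rw [Walk.length_reverse, Walk.length_map] at hlen
  exact_mod_cast Order.add_one_le_of_lt hlen

/-- If `S = (v₁, …, v_t)` is a valid strategy, then for every `1 ≤ i ≤ t` the
distance from `s` to `vᵢ` in the subgraph of `G` induced on `(V(G) ∖ S) ∪ {vᵢ}` is at least `i`.
(Here `i` is 0-indexed, so the bound is `i + 1`.) -/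
theorem dist_to_defended_ge {V : Type*} [Fintype V] (G : SimpleGraph V) (s : V)
    (S : List V) (hS : ValidStrategy G s S) (i : ℕ) (hi : i < S.length)
    (hs : s ∈ ({x | x ∉ S} ∪ {S.get ⟨i, hi⟩} : Set V))
    (hv : S.get ⟨i, hi⟩ ∈ ({x | x ∉ S} ∪ {S.get ⟨i, hi⟩} : Set V)) :
    (i : ℕ∞) + 1 ≤
      (G.induce ({x | x ∉ S} ∪ {S.get ⟨i, hi⟩} : Set V)).edist ⟨s, hs⟩ ⟨S.get ⟨i, hi⟩, hv⟩ :=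
  dist_to_defended_ge_general G s S hS i hi hs hv
end

section
/- Let G be a finite simple graph and s a vertex of G, and let l be the length of a longest induced path in G starting at s. Then every optimal strategy for the firefighting process on (G, s) defends at most l vertices. -/
open SimpleGraph

variable {V : Type*}

/-!
Let `v` be the last vertex defended by an optimal strategy `S`. Dropping `v` yields a valid
strategy which, by minimality, saves fewer vertices; this is only possible if `v` has a burned
neighbour. Hence some walk from `s` to `v` runs through burned vertices only, and so does an
induced path `P` extracted from it. No vertex of `P` other than `v` is ever defended, so the fire
would reach `v` along `P` after `|P|` steps; as `v` is still unburned when it is defended at step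
`|S|`, we get `|S| ≤ |P| ≤ l`.
-/

section Burning

variable {G : SimpleGraph V} {s : V} {S T : List V}

theorem burnt_monotone : Monotone (burnt G s S) :=
  monotone_nat_of_le_succ fun _ => Set.subset_union_left

theorem burnt_take_of_le {i n : ℕ} (h : i ≤ n) : burnt G s (S.take n) i = burnt G s S i := by
  induction i with
  | zero => rfl
  | succ i ih => rw [burnt, burnt, ih (by omega), List.take_take, min_eq_left h]

theorem burnt_subset_of_prefix (h : T <+: S) (i : ℕ) : burnt G s S i ⊆ burnt G s T i := by
  induction i with
  | zero => exact subset_rfl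
  | succ i ih =>
    rintro u (hu | ⟨huS, b, hb, hub⟩)
    · exact Or.inl (ih hu)
    · exact Or.inr ⟨fun huT => huS ((h.take _).subset huT), b, ih hb, hub⟩

theorem burnt_subset_burnt_append
    (h : ∀ v ∈ T, ∀ b ∈ BurntSet G s (S ++ T), ¬ G.Adj v b) (i : ℕ) :
    burnt G s S i ⊆ burnt G s (S ++ T) i := by
  induction i with
  | zero => exact subset_rfl
  | succ i ih =>
    rintro u (hu | ⟨huS, b, hb, hub⟩)
    · exact Or.inl (ih hu)
    · refine Or.inr ⟨fun huST => ?_, b, ih hb, hub⟩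
      rw [List.take_append, List.mem_append] at huST
      rcases huST with huS' | huT
      · exact huS huS'
      · exact h u (List.take_subset _ _ huT) b (Set.mem_iUnion.2 ⟨i, ih hb⟩) hub

theorem mem_burnt_add_length {a u : V} {m : ℕ} (ha : a ∈ burnt G s S m) (p : G.Walk a u)
    (hp : ∀ x ∈ p.support, x ∉ S.take (m + p.length)) : u ∈ burnt G s S (m + p.length) := by
  induction p generalizing m with
  | nil => exact ha
  | @cons a c u hac q ih =>
    have hlen : m + (Walk.cons hac q).length = m + 1 + q.length := by
      rw [Walk.length_cons]; omega
    rw [hlen] at hp ⊢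
    have hc : c ∈ burnt G s S (m + 1) :=
      Or.inr ⟨fun hcS => hp c (by simp) (List.take_subset_take_left _ (by omega) hcS), a, ha,
        hac.symm⟩
    exact ih hc fun x hx => hp x (by simp [hx])

theorem exists_walk_of_mem_burnt {u : V} {m : ℕ} (hu : u ∈ burnt G s S m) :
    ∃ p : G.Walk s u, ∀ x ∈ p.support, x ∈ burnt G s S m := by
  induction m generalizing u with
  | zero =>
    obtain rfl : u = s := hu
    exact ⟨Walk.nil, fun x hx => List.mem_singleton.1 hx⟩
  | succ m ih =>
    have hmono : burnt G s S m ⊆ burnt G s S (m + 1) := burnt_monotone m.le_succ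
    rcases hu with hu | hnew
    · obtain ⟨p, hp⟩ := ih hu
      exact ⟨p, fun x hx => hmono (hp x hx)⟩
    · have ⟨_, b, hb, hub⟩ := hnew
      obtain ⟨p, hp⟩ := ih hb
      refine ⟨p.concat hub.symm, fun x hx => ?_⟩
      rw [Walk.support_concat, List.mem_append, List.mem_singleton] at hx
      rcases hx with hx | rfl
      · exact hmono (hp x hx)
      · exact Or.inr hnew

namespace ValidStrategy

theorem take (hS : ValidStrategy G s S) (n : ℕ) : ValidStrategy G s (S.take n) := by
  refine ⟨hS.1.sublist (List.take_sublist _ _), fun i hi => ?_⟩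
  rw [List.length_take] at hi
  rw [burnt_take_of_le (by omega)]
  simpa using hS.2 i (by omega)

theorem notMem_burntSet (hS : ValidStrategy G s S) {x : V} (hx : x ∈ S) :
    x ∉ BurntSet G s S := by
  obtain ⟨i, hi, rfl⟩ := List.mem_iff_getElem.1 hx
  have hsafe : ∀ m, i ≤ m → S[i] ∉ burnt G s S m := by
    intro m hm
    induction m, hm using Nat.le_induction with
    | base => simpa using hS.2 i hi
    | succ m hm ih =>
      rintro (h | ⟨hmem, -⟩)
      · exact ih h
      · exact hmem (List.mem_take_iff_getElem.2 ⟨i, by omega, rfl⟩)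
  intro hburnt
  obtain ⟨m, hm⟩ := Set.mem_iUnion.1 hburnt
  exact hsafe (max i m) (le_max_left _ _) (burnt_monotone (le_max_right _ _) hm)

theorem lt_length_of_walk_s3 (hS : ValidStrategy G s S) {i : ℕ} (hi : i < S.length) {v : V}
    (hv : S[i] = v) (p : G.Walk s v) (hp : ∀ x ∈ p.support, x ∈ S → x = v) :
    i < p.length := by
  by_contra! hle
  have hv_notMem : v ∉ S.take p.length := by
    intro hmem
    obtain ⟨j, hj, hjv⟩ := List.mem_take_iff_getElem.1 hmem
    have := hS.1.getElem_inj_iff.1 (hjv.trans hv.symm)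
    omega
  have hburn : v ∈ burnt G s S (0 + p.length) := by
    refine mem_burnt_add_length rfl p fun x hx hxS => ?_
    rw [zero_add] at hxS
    exact hv_notMem (hp x hx (List.take_subset _ _ hxS) ▸ hxS)
  rw [zero_add] at hburn
  exact hS.2 i hi (by simpa [hv] using burnt_monotone hle hburn)

end ValidStrategy

theorem MinimalStrategy.exists_adj_burntSet {v : V} (hS : MinimalStrategy G s (S ++ [v])) :
    ∃ b ∈ BurntSet G s (S ++ [v]), G.Adj v b := by
  by_contra! h
  have hvalid : ValidStrategy G s S := by simpa using hS.1.take S.length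
  have heq : BurntSet G s S = BurntSet G s (S ++ [v]) :=
    (Set.iUnion_mono (burnt_subset_burnt_append (by simpa using h))).antisymm
      (Set.iUnion_mono (burnt_subset_of_prefix (List.prefix_append _ _)))
  have hlt := hS.2 S (List.sublist_append_left _ _) (by simp) hvalid
  rw [sav, sav, heq] at hlt
  exact lt_irrefl _ hlt

end Burning

namespace SimpleGraph.Walk

variable {G : SimpleGraph V} {a b : V}

theorem adj_toSubgraph_cons_or_exists_shorter [DecidableEq V] {c y : V} (h : G.Adj a c)
    (q : G.Walk c b) (hy : y ∈ q.support) (hay : G.Adj a y) :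
    (cons h q).toSubgraph.Adj a y ∨
      ∃ r : G.Walk a b, r.length < (cons h q).length ∧ r.support ⊆ (cons h q).support := by
  by_cases hyc : y = c
  · subst hyc
    left
    simp
  · right
    refine ⟨cons hay (q.dropUntil y hy), ?_, ?_⟩
    · have hlen := congrArg length (q.take_spec hy)
      have htake : (q.takeUntil y hy).length ≠ 0 := fun h0 =>
        hyc (eq_of_length_eq_zero h0).symm
      rw [length_append] at hlen
      simp only [length_cons]
      omega
    · intro z hz
      rw [support_cons, List.mem_cons] at hz ⊢
      exact hz.imp_right fun hz => q.support_dropUntil_subset_support hy hz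

theorem adj_toSubgraph_or_exists_shorter (p : G.Walk a b) {x y : V} (hx : x ∈ p.support)
    (hy : y ∈ p.support) (hxy : G.Adj x y) :
    p.toSubgraph.Adj x y ∨ ∃ q : G.Walk a b, q.length < p.length ∧ q.support ⊆ p.support := by
  classical
  induction p with
  | nil =>
    rw [support_nil, List.mem_singleton] at hx hy
    exact absurd (hx ▸ hy ▸ hxy) G.irrefl
  | @cons a c b h q ih =>
    rw [support_cons, List.mem_cons] at hx hy
    rcases hx with rfl | hx <;> rcases hy with rfl | hy
    · exact absurd rfl hxy.ne
    · exact adj_toSubgraph_cons_or_exists_shorter h q hy hxy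
    · exact (adj_toSubgraph_cons_or_exists_shorter h q hx hxy.symm).imp_left Subgraph.Adj.symm
    · refine (ih hx hy).imp (fun hq => Or.inr hq) fun ⟨r, hr, hrq⟩ => ⟨cons h r, ?_, ?_⟩
      · simpa using hr
      · rw [support_cons, support_cons]
        exact List.cons_subset_cons _ hrq

theorem exists_isInducedPath_support_subset (p : G.Walk a b) :
    ∃ q : G.Walk a b, IsInducedPath G q ∧ q.support ⊆ p.support := by
  classical
  induction hn : p.length using Nat.strong_induction_on generalizing p with
  | _ n ih =>
  by_cases hchord : ∀ x ∈ p.bypass.support, ∀ y ∈ p.bypass.support,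
      G.Adj x y → p.bypass.toSubgraph.Adj x y
  · exact ⟨p.bypass, ⟨p.bypass_isPath, hchord⟩, p.support_bypass_subset_support⟩
  · push Not at hchord
    obtain ⟨x, hx, y, hy, hxy, hnot⟩ := hchord
    obtain ⟨r, hr, hrp⟩ := (p.bypass.adj_toSubgraph_or_exists_shorter hx hy hxy).resolve_left hnot
    obtain ⟨q, hq, hqr⟩ := ih r.length (hn ▸ hr.trans_le p.length_bypass_le_length) r rfl
    exact ⟨q, hq, fun z hz => p.support_bypass_subset_support (hrp (hqr hz))⟩

end SimpleGraph.Walk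

theorem optimal_strategy_length_le_general {V : Type*} (G : SimpleGraph V) (s : V) (l : ℕ)
    (hub : ∀ (u : V) (p : G.Walk s u), IsInducedPath G p → p.length ≤ l)
    (S : List V) (hS : OptimalStrategy G s S) :
    S.length ≤ l := by
  obtain rfl | ⟨S, v, rfl⟩ := S.eq_nil_or_concat'
  · exact Nat.zero_le l
  have hvalid := hS.1.1
  obtain ⟨b, hb, hvb⟩ := hS.1.exists_adj_burntSet
  obtain ⟨k, hbk⟩ := Set.mem_iUnion.1 hb
  obtain ⟨p, hp⟩ := exists_walk_of_mem_burnt hbk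
  obtain ⟨q, hq, hqp⟩ := (p.concat hvb.symm).exists_isInducedPath_support_subset
  have hlt : S.length < q.length := by
    refine hvalid.lt_length_of_walk_s3 (by simp) (by simp) q fun x hx hxS => ?_
    have hx' := hqp hx
    rw [Walk.support_concat, List.mem_append, List.mem_singleton] at hx'
    exact hx'.resolve_left fun hxp =>
      hvalid.notMem_burntSet hxS (Set.mem_iUnion.2 ⟨k, hp x hxp⟩)
  simpa using hlt.trans_le (hub v q hq)

/-- If `l` is the length of a longest induced path in `G` starting at `s`, then
every optimal strategy for the firefighting process on `(G, s)` defends at most `l` vertices. -/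
theorem optimal_strategy_length_le {V : Type*} [Fintype V] (G : SimpleGraph V) (s : V) (l : ℕ)
    (hub : ∀ (u : V) (p : G.Walk s u), IsInducedPath G p → p.length ≤ l)
    (hmax : ∃ (u : V) (p : G.Walk s u), IsInducedPath G p ∧ p.length = l)
    (S : List V) (hS : OptimalStrategy G s S) :
    S.length ≤ l :=
  optimal_strategy_length_le_general G s l hub S hS
end
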